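/- Define u(x) := −1/ln x and b(x) := x^{−1}(1 + 2/ln x) for x ∈ (0,1/3). Then: (i) u is infinitely differentiable and strictly positive on (0,1/3), and u(x) → 0 as x → 0⁺; (ii) u''(x) + b(x)·u'(x) = 0 for every x ∈ (0,1/3); (iii) x·b(x) → 1 as x → 0⁺; (iv) for every β > 0, x^{−β}·u(x) → +∞ as x → 0⁺. -/

import Mathlib

open Real Set Filter

noncomputable section

/-- `u(x) = -1 / ln x`. -/
def exU : ℝ → ℝ := fun x => -1 / Real.log x

/-- `b(x) = x⁻¹ (1 + 2 / ln x)`. -/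
def exB : ℝ → ℝ := fun x => x⁻¹ * (1 + 2 / Real.log x)

lemma log_neg_of_mem {x : ℝ} (hx : x ∈ Set.Ioo (0 : ℝ) (1 / 3)) : Real.log x < 0 :=
  Real.log_neg hx.1 (by linarith [hx.2])

lemma hasDerivAt_exU {x : ℝ} (hx0 : 0 < x) (hxl : Real.log x ≠ 0) :
    HasDerivAt exU (x⁻¹ * ((Real.log x) ^ 2)⁻¹) x := by
  have h := ((Real.hasDerivAt_log hx0.ne').inv hxl).neg
  have : exU = fun y => -(Real.log y)⁻¹ := by
    funext y; simp [exU, neg_div, one_div]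
  rw [this]
  exact h.congr_deriv (by ring)

def exV : ℝ → ℝ := fun x => x⁻¹ * ((Real.log x) ^ 2)⁻¹

lemma hasDerivAt_exV {x : ℝ} (hx0 : 0 < x) (hxl : Real.log x ≠ 0) :
    HasDerivAt exV (-(x ^ 2)⁻¹ * ((Real.log x) ^ 2)⁻¹
      + x⁻¹ * (-(2 * Real.log x * x⁻¹) / ((Real.log x) ^ 2) ^ 2)) x := by
  have h1 : HasDerivAt (fun y : ℝ => y⁻¹) (-(x ^ 2)⁻¹) x := hasDerivAt_inv hx0.ne'
  have h2 : HasDerivAt (fun y => ((Real.log y) ^ 2)⁻¹)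
      (-(2 * Real.log x ^ 1 * x⁻¹) / ((Real.log x) ^ 2) ^ 2) x :=
    (((Real.hasDerivAt_log hx0.ne').pow 2).inv (pow_ne_zero 2 hxl))
  exact (h1.mul h2).congr_deriv (by ring)

/-- the 1-D optimality example. -/
theorem optimality_example :
    (ContDiffOn ℝ (⊤ : ℕ∞) exU (Set.Ioo (0 : ℝ) (1 / 3)) ∧
      (∀ x ∈ Set.Ioo (0 : ℝ) (1 / 3), 0 < exU x) ∧
      Tendsto exU (nhdsWithin 0 (Set.Ioi 0)) (nhds 0)) ∧
    (∀ x ∈ Set.Ioo (0 : ℝ) (1 / 3),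
      deriv (deriv exU) x + exB x * deriv exU x = 0) ∧
    Tendsto (fun x => x * exB x) (nhdsWithin 0 (Set.Ioi 0)) (nhds 1) ∧
    (∀ β > (0 : ℝ),
      Tendsto (fun x : ℝ => x ^ (-β) * exU x) (nhdsWithin 0 (Set.Ioi 0)) atTop) := by
  have hlogtop : Tendsto (fun x => -Real.log x) (nhdsWithin 0 (Set.Ioi 0)) atTop :=
    tendsto_neg_atBot_atTop.comp Real.tendsto_log_nhdsGT_zero
  refine ⟨⟨?_, ?_, ?_⟩, ?_, ?_, ?_⟩
  · -- smoothness
    have hsub : Set.Ioo (0 : ℝ) (1 / 3) ⊆ {(0 : ℝ)}ᶜ := fun x hx => by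
      simp [hx.1.ne']
    have hlog : ContDiffOn ℝ (⊤ : ℕ∞) Real.log (Set.Ioo (0 : ℝ) (1 / 3)) :=
      Real.contDiffOn_log.mono hsub
    exact (contDiffOn_const.div hlog fun x hx => (log_neg_of_mem hx).ne)
  · intro x hx
    have h := log_neg_of_mem hx
    simp only [exU]
    exact div_pos_of_neg_of_neg (by norm_num) h
  · -- tendsto 0
    have h : Tendsto (fun x => (-Real.log x)⁻¹) (nhdsWithin 0 (Set.Ioi 0)) (nhds 0) :=
      hlogtop.inv_tendsto_atTop
    refine h.congr fun x => ?_
    simp [exU, neg_div, one_div, inv_neg]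
  · -- ODE
    intro x hx
    have hx0 := hx.1
    have hxl := (log_neg_of_mem hx).ne
    have hd1 : ∀ y ∈ Set.Ioo (0 : ℝ) (1 / 3), deriv exU y = exV y := by
      intro y hy
      exact (hasDerivAt_exU hy.1 (log_neg_of_mem hy).ne).deriv
    have hev : deriv exU =ᶠ[nhds x] exV :=
      Filter.eventuallyEq_of_mem (Ioo_mem_nhds hx0 hx.2) hd1
    have h2 : deriv (deriv exU) x = deriv exV x := hev.deriv_eq
    rw [h2, (hasDerivAt_exV hx0 hxl).deriv, hd1 x hx]
    simp only [exB, exV]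
    field_simp
    ring
  · -- x * b x → 1
    have h2 : Tendsto (fun x => 1 + 2 / Real.log x) (nhdsWithin 0 (Set.Ioi 0)) (nhds 1) := by
      have : Tendsto (fun x => 2 / Real.log x) (nhdsWithin 0 (Set.Ioi 0)) (nhds 0) := by
        have h3 : Tendsto (fun x => (Real.log x)⁻¹) (nhdsWithin 0 (Set.Ioi 0)) (nhds 0) := by
          have := hlogtop.inv_tendsto_atTop.neg
          simpa [inv_neg] using this
        simpa [div_eq_mul_inv] using h3.const_mul (2 : ℝ)
      simpa using (tendsto_const_nhds (x := (1:ℝ))).add this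
    refine (h2.congr' ?_)
    filter_upwards [self_mem_nhdsWithin] with x (hx : 0 < x)
    simp only [exB]
    rw [← mul_assoc, mul_inv_cancel₀ hx.ne', one_mul]
  · -- blow-up
    intro β hβ
    have h0 : Tendsto (fun x => -Real.log x * x ^ β) (nhdsWithin 0 (Set.Ioi 0)) (nhds 0) := by
      have := tendsto_log_mul_rpow_nhdsGT_zero hβ
      simpa [neg_mul] using this.neg
    have hpos : ∀ᶠ x in nhdsWithin (0:ℝ) (Set.Ioi 0), 0 < -Real.log x * x ^ β := by
      filter_upwards [Ioo_mem_nhdsGT (by norm_num : (0:ℝ) < 1)]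
        with x hx
      have := Real.log_neg hx.1 hx.2
      have := Real.rpow_pos_of_pos hx.1 β
      nlinarith
    have h1 : Tendsto (fun x => -Real.log x * x ^ β) (nhdsWithin 0 (Set.Ioi 0))
        (nhdsWithin 0 (Set.Ioi 0)) :=
      tendsto_nhdsWithin_of_tendsto_nhds_of_eventually_within _ h0 hpos
    have h2 := h1.inv_tendsto_nhdsGT_zero
    refine h2.congr' ?_
    filter_upwards [self_mem_nhdsWithin] with x (hx : 0 < x)
    have hxβ : x ^ β ≠ 0 := (Real.rpow_pos_of_pos hx β).ne'
    simp only [Pi.inv_apply, exU, Real.rpow_neg hx.le]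
    rw [mul_inv, inv_neg]
    ring
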